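/- For real constants b > c ≥ 0, the integral ∫₀^∞ e^{-c x} K₀(b x) dx equals arccos(c/b) / √(b² - c²), where K₀ is the modified Bessel function of the second kind of order 0, defined by K₀(r) = ∫₀^∞ exp(-r·cosh t) dt for r > 0. -/

import Mathlib

/-!
Inserting the definition of `K₀` and exchanging the two integrals (the integrand is positive)
turns the left-hand side into `∫₀^∞ dt / (c + b cosh t)`. This integral is evaluated by the
antiderivative `t ↦ arccos ((b + c cosh t) / (c + b cosh t)) / √(b² - c²)`, which vanishes at
`t = 0` and tends to `arccos (c / b) / √(b² - c²)` as `t → ∞`.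
-/

open Real Filter Set MeasureTheory

/-- Modified Bessel function of the second kind of order 0. -/
noncomputable def K0 (r : ℝ) : ℝ := ∫ t in Ioi (0 : ℝ), Real.exp (-r * Real.cosh t)

open Topology

lemma integral_exp_neg_mul_Ioi_zero {r : ℝ} (hr : 0 < r) :
    ∫ x in Ioi (0 : ℝ), exp (-r * x) = r⁻¹ := by
  simpa [neg_div, div_neg] using integral_exp_mul_Ioi (neg_neg_of_pos hr) 0

section

variable {b c : ℝ}

lemma add_mul_cosh_pos (h : |c| < b) (t : ℝ) : 0 < c + b * cosh t := by
  have h₁ := one_le_cosh t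
  have h₂ := neg_abs_le c
  nlinarith [abs_nonneg c]

lemma one_sub_sq_cosh_ratio (h : |c| < b) (t : ℝ) :
    1 - ((b + c * cosh t) / (c + b * cosh t)) ^ 2
      = (b ^ 2 - c ^ 2) * (sinh t / (c + b * cosh t)) ^ 2 := by
  have hD := (add_mul_cosh_pos h t).ne'
  field_simp
  linear_combination (b ^ 2 - c ^ 2) * cosh_sq t

lemma hasDerivAt_arccos_cosh_ratio (h : |c| < b) {t : ℝ} (ht : 0 < t) :
    HasDerivAt (fun t => arccos ((b + c * cosh t) / (c + b * cosh t)) / √(b ^ 2 - c ^ 2))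
      (c + b * cosh t)⁻¹ t := by
  have hD := add_mul_cosh_pos h t
  have hs : 0 < b ^ 2 - c ^ 2 := by nlinarith [abs_nonneg c, sq_abs c]
  have hsinh : 0 < sinh t := sinh_pos_iff.mpr ht
  have hu : 0 < 1 - ((b + c * cosh t) / (c + b * cosh t)) ^ 2 := by
    rw [one_sub_sq_cosh_ratio h]; positivity
  have hu₁ : (b + c * cosh t) / (c + b * cosh t) ≠ -1 := fun h₁ => by norm_num [h₁] at hu
  have hu₂ : (b + c * cosh t) / (c + b * cosh t) ≠ 1 := fun h₁ => by norm_num [h₁] at hu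
  have hratio := (((hasDerivAt_cosh t).const_mul c).const_add b).div
    (((hasDerivAt_cosh t).const_mul b).const_add c) hD.ne'
  refine (((hasDerivAt_arccos hu₁ hu₂).comp t hratio).div_const _).congr_deriv ?_
  rw [one_sub_sq_cosh_ratio h, sqrt_mul hs.le, sqrt_sq (by positivity)]
  have := (sqrt_pos.mpr hs).ne'
  field_simp
  rw [sq_sqrt hs.le]
  ring

lemma tendsto_cosh_ratio (h : |c| < b) :
    Tendsto (fun t => (b + c * cosh t) / (c + b * cosh t)) atTop (𝓝 (c / b)) := by
  have hb : 0 < b := (abs_nonneg c).trans_lt h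
  have hcosh : Tendsto cosh atTop atTop := by
    refine tendsto_atTop_mono (fun t => ?_) (tendsto_exp_atTop.atTop_div_const two_pos)
    rw [cosh_eq]
    linarith [exp_pos (-t)]
  have hD : Tendsto (fun t => (c + b * cosh t)⁻¹) atTop (𝓝 0) :=
    tendsto_atTop_add_const_left _ c (hcosh.const_mul_atTop hb) |>.inv_tendsto_atTop
  -- `(b + c cosh t) / (c + b cosh t) = c / b + (b² - c²) / (b (c + b cosh t))`
  have hlim := (hD.const_mul ((b ^ 2 - c ^ 2) / b)).const_add (c / b)
  rw [mul_zero, add_zero] at hlim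
  refine hlim.congr fun t => ?_
  have := (add_mul_cosh_pos h t).ne'
  field_simp
  ring

lemma continuous_arccos_cosh_ratio (h : |c| < b) :
    Continuous (fun t => arccos ((b + c * cosh t) / (c + b * cosh t)) / √(b ^ 2 - c ^ 2)) :=
  (continuous_arccos.comp ((continuous_const.add (continuous_const.mul continuous_cosh)).div
    (continuous_const.add (continuous_const.mul continuous_cosh))
    fun t => (add_mul_cosh_pos h t).ne')).div_const _

lemma integrableOn_inv_add_mul_cosh (h : |c| < b) :
    IntegrableOn (fun t => (c + b * cosh t)⁻¹) (Ioi 0) :=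
  integrableOn_Ioi_deriv_of_nonneg (continuous_arccos_cosh_ratio h).continuousWithinAt
    (fun _ ht => hasDerivAt_arccos_cosh_ratio h ht)
    (fun t _ => (inv_pos.mpr (add_mul_cosh_pos h t)).le)
    (((continuous_arccos.tendsto _).comp (tendsto_cosh_ratio h)).div_const _)

lemma integral_inv_add_mul_cosh (h : |c| < b) :
    ∫ t in Ioi 0, (c + b * cosh t)⁻¹ = arccos (c / b) / √(b ^ 2 - c ^ 2) := by
  rw [integral_Ioi_of_hasDerivAt_of_nonneg (continuous_arccos_cosh_ratio h).continuousWithinAt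
    (fun _ ht => hasDerivAt_arccos_cosh_ratio h ht)
    (fun t _ => (inv_pos.mpr (add_mul_cosh_pos h t)).le)
    (((continuous_arccos.tendsto _).comp (tendsto_cosh_ratio h)).div_const _)]
  have hbc : c + b ≠ 0 := by simpa using (add_mul_cosh_pos h 0).ne'
  simp [add_comm b c, div_self hbc]

lemma integrable_exp_neg_add_mul_cosh_mul (h : |c| < b) :
    Integrable (fun p : ℝ × ℝ => exp (-(c + b * cosh p.2) * p.1))
      ((volume.restrict (Ioi 0)).prod (volume.restrict (Ioi 0))) := by
  have hcont : Continuous (fun p : ℝ × ℝ => exp (-(c + b * cosh p.2) * p.1)) := by fun_prop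
  rw [integrable_prod_iff' hcont.aestronglyMeasurable]
  refine ⟨.of_forall fun t => ?_, ?_⟩
  · simpa only [neg_mul, IntegrableOn] using exp_neg_integrableOn_Ioi 0 (add_mul_cosh_pos h t)
  · refine (integrableOn_inv_add_mul_cosh h).congr_fun (fun t _ => ?_) measurableSet_Ioi
    simp_rw [norm_of_nonneg (exp_pos _).le]
    exact (integral_exp_neg_mul_Ioi_zero (add_mul_cosh_pos h t)).symm

lemma integral_exp_neg_mul_K0 (h : |c| < b) :
    ∫ x in Ioi 0, exp (-c * x) * K0 (b * x) = ∫ t in Ioi 0, (c + b * cosh t)⁻¹ := by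
  calc ∫ x in Ioi 0, exp (-c * x) * K0 (b * x)
      = ∫ x in Ioi 0, ∫ t in Ioi 0, exp (-(c + b * cosh t) * x) := by
        refine setIntegral_congr_fun measurableSet_Ioi fun x _ => ?_
        rw [K0, ← integral_const_mul]
        congr with t
        rw [← exp_add]
        ring_nf
    _ = ∫ t in Ioi 0, ∫ x in Ioi 0, exp (-(c + b * cosh t) * x) :=
        integral_integral_swap (integrable_exp_neg_add_mul_cosh_mul h)
    _ = ∫ t in Ioi 0, (c + b * cosh t)⁻¹ := by
        simp_rw [integral_exp_neg_mul_Ioi_zero (add_mul_cosh_pos h _)]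

end

theorem stmt_1 (b c : ℝ) (hc : 0 ≤ c) (hbc : c < b) :
    ∫ x in Ioi (0 : ℝ), Real.exp (-c * x) * K0 (b * x)
      = Real.arccos (c / b) / Real.sqrt (b ^ 2 - c ^ 2) := by
  have h : |c| < b := by rwa [abs_of_nonneg hc]
  rw [integral_exp_neg_mul_K0 h, integral_inv_add_mul_cosh h]
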